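/- Let W = ℤ_{≤3} ∪ ⋃_{k≥1} [((k-1)(k+2))/2 + 2^{k+1}, ((k-1)(k+2))/2 + 2^{k+1} + k]. Then every asymptotic complement to W in ℤ contains at least three elements. -/

import Mathlib

open Pointwise

def IsAddAsympCompl (W C : Set ℤ) : Prop :=
  C.Nonempty ∧ ((Set.univ : Set ℤ) \ (W + C)).Finite

def blockStart (k : ℕ) : ℤ := ((k : ℤ) - 1) * ((k : ℤ) + 2) / 2 + 2 ^ (k + 1)

/-!
The gap between the `k`-th block of `W` and the next one has length `2 ^ (k + 1)`, so `W` has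
arbitrarily long gaps arbitrarily far out. A translate `n - C` of a finite set `C` fits into such a
gap, so `W + C` misses infinitely many integers: `W` has no finite asymptotic complement at all,
while a set without three distinct elements is finite.
-/

theorem Set.Infinite.exists_lt_lt {α : Type*} [LinearOrder α] {s : Set α} (hs : s.Infinite) :
    ∃ a ∈ s, ∃ b ∈ s, ∃ c ∈ s, a < b ∧ b < c := by
  obtain ⟨t, hts, ht⟩ := hs.exists_subset_card_eq 3
  let f := t.orderEmbOfFin ht
  have hf (i : Fin 3) : f i ∈ s := hts (t.orderEmbOfFin_mem ht i)
  exact ⟨f 0, hf 0, f 1, hf 1, f 2, hf 2, f.strictMono (by decide), f.strictMono (by decide)⟩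

def HasLongGaps (W : Set ℤ) : Prop :=
  ∀ N L : ℤ, ∃ m ≥ N, Disjoint (Set.Icc m (m + L)) W

theorem HasLongGaps.infinite_compl_add {W C : Set ℤ} (hW : HasLongGaps W) (hC : C.Finite) :
    (W + C)ᶜ.Infinite := by
  obtain ⟨lo, hlo⟩ := hC.bddBelow
  obtain ⟨hi, hhi⟩ := hC.bddAbove
  refine Set.infinite_of_not_bddAbove fun ⟨B, hB⟩ => ?_
  obtain ⟨m, hm, hgap⟩ := hW (B + 1 - hi) (hi - lo)
  have hout : m + hi ∈ (W + C)ᶜ := by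
    rintro ⟨w, hw, c, hc, hwc : w + c = m + hi⟩
    have hloc := hlo hc
    have hhic := hhi hc
    exact Set.disjoint_right.mp hgap hw ⟨by omega, by omega⟩
  have := hB hout
  omega

theorem blockStart_succ (k : ℕ) : blockStart (k + 1) = blockStart k + k + 2 ^ (k + 1) + 1 := by
  have h : ((k + 1 : ℕ) - 1 : ℤ) * ((k + 1 : ℕ) + 2) = ((k : ℤ) - 1) * (k + 2) + (k + 1) * 2 := by
    push_cast; ring
  rw [blockStart, h, Int.add_mul_ediv_right _ _ two_ne_zero, blockStart]
  ring

theorem blockStart_add_lt_blockStart_succ (k : ℕ) : blockStart k + k < blockStart (k + 1) := by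
  rw [blockStart_succ]
  linarith [pow_pos (two_pos : (0 : ℤ) < 2) (k + 1)]

theorem blockStart_strictMono : StrictMono blockStart :=
  strictMono_nat_of_lt_succ fun k => by
    linarith [blockStart_add_lt_blockStart_succ k, (Nat.cast_nonneg k : (0 : ℤ) ≤ k)]

theorem blockStart_add_lt_of_lt {j k : ℕ} (hjk : j < k) : blockStart j + j < blockStart k :=
  (blockStart_add_lt_blockStart_succ j).trans_le (blockStart_strictMono.monotone hjk)

theorem four_le_blockStart {k : ℕ} (hk : 1 ≤ k) : 4 ≤ blockStart k :=
  (show blockStart 1 = 4 by decide) ▸ blockStart_strictMono.monotone hk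

theorem not_mem_blocks_of_mem_gap {k : ℕ} (hk : 1 ≤ k) {x : ℤ}
    (hlo : blockStart k + k < x) (hhi : x < blockStart (k + 1)) :
    x ∉ {n : ℤ | n ≤ 3} ∪ ⋃ j ∈ {j : ℕ | 1 ≤ j}, Set.Icc (blockStart j) (blockStart j + j) := by
  simp only [Set.mem_union, Set.mem_ofPred_eq, Set.mem_iUnion, Set.mem_Icc, not_or, not_exists,
    not_and, not_le]
  refine ⟨by linarith [four_le_blockStart hk], fun j _ hjx => ?_⟩
  rcases lt_trichotomy j k with hjk | rfl | hjk
  · linarith [blockStart_add_lt_of_lt hjk]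
  · exact hlo
  · linarith [blockStart_strictMono.monotone (Nat.succ_le_of_lt hjk)]

theorem hasLongGaps_blocks :
    HasLongGaps ({n : ℤ | n ≤ 3} ∪
      ⋃ k ∈ {k : ℕ | 1 ≤ k}, Set.Icc (blockStart k) (blockStart k + k)) := by
  intro N L
  obtain ⟨k, hNk, hLk, hk⟩ : ∃ k : ℕ, N < k ∧ L < k ∧ 1 ≤ k :=
    ⟨(max N L).toNat + 1, by omega, by omega, by omega⟩
  have hk_pow : (k : ℤ) < 2 ^ (k + 1) := by
    exact_mod_cast Nat.lt_two_pow_self.trans (Nat.pow_lt_pow_succ one_lt_two)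
  refine ⟨blockStart k + k + 1, by linarith [four_le_blockStart hk], ?_⟩
  refine Set.disjoint_left.mpr fun x ⟨hx₁, hx₂⟩ =>
    not_mem_blocks_of_mem_gap hk (by omega) ?_
  rw [blockStart_succ]
  omega

theorem stmt_14 (W : Set ℤ)
    (hW : W = {n : ℤ | n ≤ 3} ∪
      ⋃ k ∈ {k : ℕ | 1 ≤ k}, Set.Icc (blockStart k) (blockStart k + k))
    (C : Set ℤ) (hC : IsAddAsympCompl W C) :
    ∃ a ∈ C, ∃ b ∈ C, ∃ c ∈ C, a < b ∧ b < c := by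
  by_contra h
  have hC_fin : C.Finite := Set.not_infinite.mp fun hC_inf => h hC_inf.exists_lt_lt
  subst hW
  exact hasLongGaps_blocks.infinite_compl_add hC_fin (Set.compl_eq_univ_sdiff _ ▸ hC.2)
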